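/- arXiv:1710.01021 — 2 statements merged into one kernel-verified Lean document; each statement's English description precedes it below -/
import Mathlib

section
/- Let K be a number field. The ring of Witt vectors W_{O_K}(O_K) admits the explicit presentation W_{O_K}(O_K) = { ξ ∈ O_K^{I_K} : ξ_{p·a} ≡ ξ_a (mod p^{1+v_p(a)}) for all p ∈ P_K and all a ∈ I_K }. -/
open NumberField

noncomputable section

/-- The multiplicative monoid `I_K` of nonzero ideals of the ring of integers of `K`. -/
def IdealMonoid (K : Type) [Field K] [NumberField K] : Submonoid (Ideal (𝓞 K)) where
  carrier := {I | I ≠ ⊥}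
  mul_mem' := by
    intro a b ha hb h
    rcases Ideal.mul_eq_bot.mp h with h' | h'
    · exact ha h'
    · exact hb h'
  one_mem' := by
    simp only [Set.mem_setOf_eq, Ideal.one_eq_top]
    exact top_ne_bot

/-- `I_K`, the monoid of nonzero ideals, as a type. -/
abbrev IK (K : Type) [Field K] [NumberField K] := ↥(IdealMonoid K)

/-- `P_K`, the set of nonzero prime ideals of `𝓞 K`, as a type. -/
def PrimeIdeal (K : Type) [Field K] [NumberField K] :=
  {p : Ideal (𝓞 K) // p.IsPrime ∧ p ≠ ⊥}

/-- A nonzero prime ideal, regarded as an element of `I_K`. -/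
def PrimeIdeal.toIK {K : Type} [Field K] [NumberField K] (p : PrimeIdeal K) : IK K :=
  ⟨p.1, p.2.2⟩

/-- `#k_p`: the cardinality of the residue ring `R ⧸ p`. -/
def residueCard {R : Type} [CommRing R] (p : Ideal R) : ℕ :=
  Nat.card (R ⧸ p)

/-- The shift operator `ψ_a` on `A^{I_K}`: `(ψ_a ξ)_b = ξ_{a·b}`. -/
def shift {K : Type} [Field K] [NumberField K] {A : Type} (a : IK K)
    (ξ : IK K → A) : IK K → A :=
  fun b => ξ (a * b)

/-- For an ideal `p` of `𝓞 K` and a subset `S ⊆ A^{I_K}`, the set `p·S` of all finite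
sums of products of elements of `p` with elements of (the module generated by) `S`. -/
def idealMulSet {K : Type} [Field K] [NumberField K] {A : Type} [CommRing A]
    [Algebra (𝓞 K) A] (p : Ideal (𝓞 K)) (S : Set (IK K → A)) : Set (IK K → A) :=
  ↑(p • Submodule.span (𝓞 K) S)

/-- The descending chain `U_n(A)` of subsets of `A^{I_K}`. -/
def UnSet (K : Type) [Field K] [NumberField K] (A : Type) [CommRing A]
    [Algebra (𝓞 K) A] : ℕ → Set (IK K → A)
  | 0 => Set.univ
  | n + 1 => {ξ | ξ ∈ UnSet K A n ∧ ∀ p : PrimeIdeal K,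
      shift p.toIK ξ - ξ ^ residueCard p.1 ∈ idealMulSet p.1 (UnSet K A n)}

/-- The ring of Witt vectors `W_{O_K}(A) = ⋂ₙ U_n(A)`, as a subset of `A^{I_K}`. -/
def WittSet (K : Type) [Field K] [NumberField K] (A : Type) [CommRing A]
    [Algebra (𝓞 K) A] : Set (IK K → A) :=
  ⋂ n, UnSet K A n

/-- A deterministic finite automaton with output, over input alphabet `Δ` and
output alphabet `O`. -/
structure DFAO (Δ O : Type) : Type 1 where
  State : Type
  [finState : Finite State]
  trans : State → Δ → State
  start : State
  out : State → O

/-- The output of a DFAO on an input word, processing letters from left to right. -/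
def DFAO.output {Δ O : Type} (M : DFAO Δ O) (l : List Δ) : O :=
  M.out (l.foldl M.trans M.start)

/-- `ξ ∈ A^{I_K}` is automatic if some DFAO with input alphabet `P_K` and output
alphabet `A` produces `ξ_a` from every word of primes whose product is `a`. -/
def IsAutomatic {K : Type} [Field K] [NumberField K] {A : Type}
    (ξ : IK K → A) : Prop :=
  ∃ M : DFAO (PrimeIdeal K) A, ∀ (l : List (PrimeIdeal K)) (a : IK K),
    (a : Ideal (𝓞 K)) = (l.map Subtype.val).prod → ξ a = M.output l

/-- `v_p(a)`: the largest `e` such that `p^e` divides `a`. -/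
def vIdeal {R : Type} [CommRing R] (p a : Ideal R) : ℕ :=
  sSup {e : ℕ | p ^ e ∣ a}

/-!
By induction on `n`, `U_n(𝓞 K)` consists of the `ξ` with
`ξ_{p·a} ≡ ξ_a (mod p^{min(n, 1 + v_p(a))})`; intersecting over `n` gives the presentation.
The inductive step rests on three facts. Since `p` is invertible, `p · U_n` is cut out by the
same congruences multiplied by `p`, together with `ξ ≡ 0 (mod p)`. Fermat's little theorem
`x^{#k_p} ≡ x (mod p)` handles the congruences modulo `p`, and `x ≡ y` modulo both `p` and `I`
implies `x^{#k_p} ≡ y^{#k_p} (mod p·I)`, because `#k_p ∈ p`. For two distinct primes `p ≠ p'`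
the congruences modulo `p` and modulo powers of `p'` are checked separately (they are coprime).
-/

section Valuation

variable {R : Type} [CommRing R] [IsDedekindDomain R] {p q a : Ideal R}

theorem vIdeal_eq_multiplicity (hp : Prime p) (ha : a ≠ ⊥) : vIdeal p a = multiplicity p a := by
  have hfin := FiniteMultiplicity.of_prime_left hp ha
  have hset : {e : ℕ | p ^ e ∣ a} = Set.Iic (multiplicity p a) := by
    ext e
    exact hfin.pow_dvd_iff_le_multiplicity
  rw [vIdeal, hset, csSup_Iic]

theorem vIdeal_mul_of_not_dvd (hp : Prime p) (hpq : ¬p ∣ q) (hq : q ≠ ⊥) (ha : a ≠ ⊥) :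
    vIdeal p (q * a) = vIdeal p a := by
  have hqa : q * a ≠ ⊥ := mul_ne_zero hq ha
  rw [vIdeal_eq_multiplicity hp hqa, vIdeal_eq_multiplicity hp ha,
    multiplicity_mul hp (FiniteMultiplicity.of_prime_left hp hqa),
    multiplicity_eq_zero.mpr hpq, zero_add]

theorem vIdeal_self_mul (hp : Prime p) (ha : a ≠ ⊥) : vIdeal p (p * a) = vIdeal p a + 1 := by
  have hpa : p * a ≠ ⊥ := mul_ne_zero hp.ne_zero ha
  rw [vIdeal_eq_multiplicity hp hpa, vIdeal_eq_multiplicity hp ha,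
    multiplicity_mul hp (FiniteMultiplicity.of_prime_left hp hpa), multiplicity_self, add_comm]

theorem vIdeal_eq_zero_of_not_dvd (hp : Prime p) (ha : a ≠ ⊥) (hpa : ¬p ∣ a) :
    vIdeal p a = 0 := by
  rw [vIdeal_eq_multiplicity hp ha, multiplicity_eq_zero.mpr hpa]

end Valuation

section ResidueCard

variable {R : Type} [CommRing R]

theorem natCast_residueCard_mem (p : Ideal R) : (residueCard p : R) ∈ p := by
  rw [← Ideal.Quotient.eq_zero_iff_mem, map_natCast]
  exact Ideal.Quotient.index_eq_zero p

theorem pow_residueCard_sub_self_mem (p : Ideal R) [p.IsMaximal] [Finite (R ⧸ p)] (x : R) :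
    x ^ residueCard p - x ∈ p := by
  let := Ideal.Quotient.field p
  have := Fintype.ofFinite (R ⧸ p)
  rw [← Ideal.Quotient.eq_zero_iff_mem, map_sub, map_pow, sub_eq_zero, residueCard,
    Nat.card_eq_fintype_card]
  exact FiniteField.pow_card _

theorem pow_residueCard_sub_pow_mem_mul {p I : Ideal R} {x y : R} (hp : x - y ∈ p)
    (hI : x - y ∈ I) : x ^ residueCard p - y ^ residueCard p ∈ p * I := by
  rw [← geom_sum₂_mul]
  refine Ideal.mul_mem_mul ?_ hI
  have hxy : Ideal.Quotient.mk p x = Ideal.Quotient.mk p y :=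
    Ideal.Quotient.mk_eq_mk_iff_sub_mem x y |>.mpr hp
  rw [← Ideal.Quotient.eq_zero_iff_mem, map_sum]
  calc ∑ i ∈ Finset.range (residueCard p),
        Ideal.Quotient.mk p (x ^ i * y ^ (residueCard p - 1 - i))
      = ∑ i ∈ Finset.range (residueCard p), Ideal.Quotient.mk p y ^ (residueCard p - 1) := by
        refine Finset.sum_congr rfl fun i hi => ?_
        rw [map_mul, map_pow, map_pow, hxy, ← pow_add]
        congr 1
        have := Finset.mem_range.mp hi
        omega
    _ = 0 := by
        rw [Finset.sum_const, Finset.card_range, nsmul_eq_mul,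
          ← map_natCast (Ideal.Quotient.mk p),
          Ideal.Quotient.eq_zero_iff_mem.mpr (natCast_residueCard_mem p), zero_mul]

theorem sub_mem_mul_iff_of_sub_mem {p I : Ideal R} {x y z : R} (hp : y - z ∈ p)
    (hI : y - z ∈ I) :
    x - y ∈ p * I ↔ (x - y ^ residueCard p) - (y - z ^ residueCard p) ∈ p * I := by
  rw [show (x - y ^ residueCard p) - (y - z ^ residueCard p)
      = (x - y) - (y ^ residueCard p - z ^ residueCard p) by ring,
    Submodule.sub_mem_iff_left _ (pow_residueCard_sub_pow_mem_mul hp hI)]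

theorem sub_pow_residueCard_sub_mem_mul {p J : Ideal R} [p.IsMaximal] [Finite (R ⧸ p)]
    (hpJ : p ⊔ J = ⊤) {a x c y : R} (hax : a - x ∈ p) (hcy : c - y ∈ p) (hac : a - c ∈ J)
    (hxy : x - y ∈ J) : (a - x ^ residueCard p) - (c - y ^ residueCard p) ∈ p * J := by
  rw [Ideal.mul_eq_inf_of_coprime hpJ]
  constructor
  · rw [show (a - x ^ residueCard p) - (c - y ^ residueCard p)
        = (a - x) - (c - y) - (x ^ residueCard p - x) + (y ^ residueCard p - y) by ring]
    exact add_mem (sub_mem (sub_mem hax hcy) (pow_residueCard_sub_self_mem p x))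
      (pow_residueCard_sub_self_mem p y)
  · rw [show (a - x ^ residueCard p) - (c - y ^ residueCard p)
        = (a - c) - (x ^ residueCard p - y ^ residueCard p) by ring]
    exact sub_mem hac (Ideal.mem_of_dvd _ (sub_dvd_pow_sub_pow x y _) hxy)

end ResidueCard

theorem mem_smul_of_forall_smul_eq_smul {R M : Type} [CommSemiring R] [AddCommMonoid M]
    [Module R M]
    {I c : Ideal R} {N : Submodule R M} {t : R} (ht : IsSMulRegular M t) (htc : t ∈ I * c)
    {x : M} (h : ∀ y ∈ c, ∃ z ∈ N, y • x = t • z) : x ∈ I • N := by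
  obtain ⟨z, hz, e⟩ : ∃ z ∈ I • N, t • x = t • z := by
    refine Submodule.mul_induction_on (C := fun s => ∃ z ∈ I • N, s • x = t • z) htc ?_ ?_
    · intro i hi y hy
      obtain ⟨z, hz, hyz⟩ := h y hy
      exact ⟨i • z, Submodule.smul_mem_smul hi hz, by rw [mul_smul, hyz, smul_comm]⟩
    · rintro s s' ⟨z, hz, e⟩ ⟨z', hz', e'⟩
      exact ⟨z + z', add_mem hz hz', by rw [add_smul, e, e', smul_add]⟩
  rwa [ht e]

namespace PrimeIdeal

variable {K : Type} [Field K] [NumberField K]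

instance isMaximal (p : PrimeIdeal K) : p.1.IsMaximal := p.2.1.isMaximal p.2.2

theorem prime (p : PrimeIdeal K) : Prime p.1 := Ideal.prime_of_isPrime p.2.2 p.2.1

theorem not_dvd_of_ne {p p' : PrimeIdeal K} (h : p ≠ p') : ¬p.1 ∣ p'.1 := by
  rw [Ideal.dvd_iff_le]
  exact fun hle => h (Subtype.ext ((p'.isMaximal.eq_of_le p.2.1.ne_top hle).symm))

end PrimeIdeal

section Presentation

variable {K : Type} [Field K] [NumberField K]

def congrSubmodule (J : PrimeIdeal K → IK K → Ideal (𝓞 K)) :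
    Submodule (𝓞 K) (IK K → 𝓞 K) where
  carrier := {ξ | ∀ p a, ξ (p.toIK * a) - ξ a ∈ J p a}
  add_mem' hξ hζ p a := by
    simpa only [Pi.add_apply, add_sub_add_comm] using add_mem (hξ p a) (hζ p a)
  zero_mem' p a := by simp
  smul_mem' r ξ hξ p a := by
    simpa only [Pi.smul_apply, smul_eq_mul, ← mul_sub] using Ideal.mul_mem_left _ r (hξ p a)

theorem mem_congrSubmodule {J : PrimeIdeal K → IK K → Ideal (𝓞 K)} {ξ : IK K → 𝓞 K} :
    ξ ∈ congrSubmodule J ↔ ∀ p a, ξ (p.toIK * a) - ξ a ∈ J p a := Iff.rfl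

theorem smul_congrSubmodule {p : Ideal (𝓞 K)} (hp : p ≠ ⊥)
    (J : PrimeIdeal K → IK K → Ideal (𝓞 K)) :
    p • congrSubmodule J =
      Submodule.pi Set.univ (fun _ => p) ⊓ congrSubmodule fun p' a => p * J p' a := by
  refine le_antisymm
    (Submodule.smul_le.mpr fun r hr ξ hξ => ⟨fun a _ => ?_, fun p' a => ?_⟩) ?_
  · exact Ideal.mul_mem_right _ _ hr
  · simpa only [Pi.smul_apply, smul_eq_mul, ← mul_sub] using Ideal.mul_mem_mul hr (hξ p' a)
  rintro η ⟨hη, hcongr⟩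
  -- Write `(t) = p * c` with `t ∈ p`; then `y • η / t ∈ congrSubmodule J` for all `y ∈ c`.
  obtain ⟨t, htp, ht0⟩ := Submodule.exists_mem_ne_zero_of_ne_bot hp
  obtain ⟨c, hc⟩ := Ideal.dvd_iff_le.mpr ((Ideal.span_singleton_le_iff_mem p).mpr htp)
  refine mem_smul_of_forall_smul_eq_smul (c := c) (t := t)
    (fun f g hfg => funext fun a => mul_left_cancel₀ ht0 (congrFun hfg a))
    (hc ▸ Ideal.mem_span_singleton_self t) fun y hy => ?_
  have hyη : ∀ a, y * η a ∈ Ideal.span {t} := fun a => by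
    rw [hc, mul_comm p]
    exact Ideal.mul_mem_mul hy (hη a (Set.mem_univ a))
  choose ζ hζ using fun a => Ideal.mem_span_singleton'.mp (hyη a)
  refine ⟨ζ, fun p' a => ?_, funext fun a => by simp [← hζ a, mul_comm]⟩
  have hmem : t * (ζ (p'.toIK * a) - ζ a) ∈ Ideal.span {t} * J p' a := by
    rw [mul_sub, mul_comm t, mul_comm t, hζ, hζ, ← mul_sub, hc, mul_comm p, mul_assoc]
    exact Ideal.mul_mem_mul hy (hcongr p' a)
  obtain ⟨w, hw, htw⟩ := Ideal.mem_span_singleton_mul.mp hmem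
  rwa [← mul_left_cancel₀ ht0 htw]

theorem PrimeIdeal.vIdeal_toIK_mul_self (p : PrimeIdeal K) (a : IK K) :
    vIdeal p.1 ↑(p.toIK * a) = vIdeal p.1 a + 1 :=
  vIdeal_self_mul p.prime a.2

theorem PrimeIdeal.vIdeal_toIK_mul_of_ne {p p' : PrimeIdeal K} (h : p ≠ p') (a : IK K) :
    vIdeal p'.1 ↑(p.toIK * a) = vIdeal p'.1 a :=
  vIdeal_mul_of_not_dvd p'.prime (PrimeIdeal.not_dvd_of_ne h.symm) p.2.2 a.2

variable (K) in
def unSubmodule (n : ℕ) : Submodule (𝓞 K) (IK K → 𝓞 K) :=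
  congrSubmodule fun p a => p.1 ^ min n (1 + vIdeal p.1 (a : Ideal (𝓞 K)))

theorem mem_unSubmodule {n : ℕ} {ξ : IK K → 𝓞 K} : ξ ∈ unSubmodule K n ↔
    ∀ (p : PrimeIdeal K) (a : IK K),
      ξ (p.toIK * a) - ξ a ∈ p.1 ^ min n (1 + vIdeal p.1 (a : Ideal (𝓞 K))) :=
  Iff.rfl

theorem unSubmodule_antitone : Antitone (unSubmodule K) := fun _ _ hmn _ hξ p a =>
  Ideal.pow_le_pow_right (min_le_min_right _ hmn) (hξ p a)

theorem sub_mem_of_mem_unSubmodule_succ {n : ℕ} {ξ : IK K → 𝓞 K}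
    (hξ : ξ ∈ unSubmodule K (n + 1)) (p : PrimeIdeal K) (a : IK K) :
    ξ (p.toIK * a) - ξ a ∈ p.1 :=
  Ideal.pow_le_self (by omega) (hξ p a)

theorem shift_sub_pow_mem_pi_iff {ξ : IK K → 𝓞 K} {p : PrimeIdeal K} :
    shift p.toIK ξ - ξ ^ residueCard p.1 ∈ Submodule.pi Set.univ (fun _ => p.1) ↔
      ∀ a, ξ (p.toIK * a) - ξ a ∈ p.1 := by
  simp only [Submodule.mem_pi, Set.mem_univ, true_implies, Pi.sub_apply, Pi.pow_apply, shift]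
  refine forall_congr' fun a => ?_
  rw [show ξ (p.toIK * a) - ξ a ^ residueCard p.1
      = (ξ (p.toIK * a) - ξ a) - (ξ a ^ residueCard p.1 - ξ a) by ring,
    Submodule.sub_mem_iff_left _ (pow_residueCard_sub_self_mem _ _)]

theorem shift_sub_pow_mem_congrSubmodule {n : ℕ} {ξ : IK K → 𝓞 K}
    (hξ : ξ ∈ unSubmodule K (n + 1)) (p : PrimeIdeal K) :
    shift p.toIK ξ - ξ ^ residueCard p.1 ∈
      congrSubmodule fun p' a => p.1 * p'.1 ^ min n (1 + vIdeal p'.1 (a : Ideal (𝓞 K))) := by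
  have hξp := sub_mem_of_mem_unSubmodule_succ hξ
  have hξn := mem_unSubmodule.mp (unSubmodule_antitone n.le_succ hξ)
  refine mem_congrSubmodule.mpr fun p' a => ?_
  by_cases hpp' : p = p'
  · subst hpp'
    have hpa := mem_unSubmodule.mp hξ p (p.toIK * a)
    rw [p.vIdeal_toIK_mul_self, show min (n + 1) (1 + (vIdeal p.1 a + 1))
      = min n (1 + vIdeal p.1 a) + 1 by omega, pow_succ'] at hpa
    exact (sub_mem_mul_iff_of_sub_mem (hξp p a) (hξn p a)).mp hpa
  · have hcop : p.1 ⊔ p'.1 ^ min n (1 + vIdeal p'.1 a) = ⊤ := Ideal.sup_pow_eq_top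
      (p.isMaximal.coprime_of_ne p'.isMaximal fun h => hpp' (Subtype.ext h))
    refine sub_pow_residueCard_sub_mem_mul hcop (hξp p _) (hξp p a) ?_ (hξn p' a)
    have hpa := mem_unSubmodule.mp hξ p' (p.toIK * a)
    rw [PrimeIdeal.vIdeal_toIK_mul_of_ne hpp', mul_left_comm] at hpa
    exact Ideal.pow_le_pow_right (min_le_min_right _ n.le_succ) hpa

theorem mem_unSubmodule_succ {n : ℕ} {ξ : IK K → 𝓞 K} (hξ : ξ ∈ unSubmodule K n)
    (hξp : ∀ (p : PrimeIdeal K) (a : IK K), ξ (p.toIK * a) - ξ a ∈ p.1)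
    (hcongr : ∀ p : PrimeIdeal K, shift p.toIK ξ - ξ ^ residueCard p.1 ∈
      congrSubmodule fun p' a => p.1 * p'.1 ^ min n (1 + vIdeal p'.1 (a : Ideal (𝓞 K)))) :
    ξ ∈ unSubmodule K (n + 1) := by
  refine mem_unSubmodule.mpr fun p a => ?_
  by_cases hpa : p.1 ∣ a
  · obtain ⟨b, hb⟩ := hpa
    have hb0 : b ≠ ⊥ := by
      rintro rfl
      exact a.2 (by rw [hb, Ideal.mul_bot])
    obtain ⟨b, rfl⟩ : ∃ b' : IK K, a = p.toIK * b' := ⟨⟨b, hb0⟩, Subtype.ext hb⟩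
    have hfrob := mem_congrSubmodule.mp (hcongr p) p b
    simp only [shift, Pi.sub_apply, Pi.pow_apply] at hfrob
    rw [p.vIdeal_toIK_mul_self, show min (n + 1) (1 + (vIdeal p.1 b + 1))
      = min n (1 + vIdeal p.1 b) + 1 by omega, pow_succ']
    exact (sub_mem_mul_iff_of_sub_mem (hξp p b) (mem_unSubmodule.mp hξ p b)).mpr hfrob
  · rw [vIdeal_eq_zero_of_not_dvd p.prime a.2 hpa, add_zero, min_eq_right (by omega), pow_one]
    exact hξp p a

theorem mem_unSubmodule_succ_iff {n : ℕ} {ξ : IK K → 𝓞 K} :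
    ξ ∈ unSubmodule K (n + 1) ↔ ξ ∈ unSubmodule K n ∧
      ∀ p : PrimeIdeal K, shift p.toIK ξ - ξ ^ residueCard p.1 ∈ p.1 • unSubmodule K n := by
  simp only [unSubmodule, fun p : PrimeIdeal K => smul_congrSubmodule p.2.2, Submodule.mem_inf,
    shift_sub_pow_mem_pi_iff]
  exact ⟨fun hξ => ⟨unSubmodule_antitone n.le_succ hξ, fun p =>
      ⟨sub_mem_of_mem_unSubmodule_succ hξ p, shift_sub_pow_mem_congrSubmodule hξ p⟩⟩,
    fun ⟨hξ, h⟩ => mem_unSubmodule_succ hξ (fun p => (h p).1) fun p => (h p).2⟩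

theorem unSet_eq_unSubmodule (n : ℕ) : UnSet K (𝓞 K) n = unSubmodule K n := by
  induction n with
  | zero => ext ξ; simp [UnSet, unSubmodule, mem_congrSubmodule]
  | succ n ih =>
    ext ξ
    simp only [UnSet, idealMulSet, ih, Submodule.span_eq, SetLike.mem_coe, mem_unSubmodule_succ_iff]
    rfl

end Presentation

/-- explicit presentation of `W_{O_K}(O_K)`: it consists exactly of those
`ξ ∈ O_K^{I_K}` with `ξ_{p·a} ≡ ξ_a (mod p^{1+v_p(a)})` for all `p ∈ P_K`, `a ∈ I_K`. -/
theorem witt_ok_presentation (K : Type) [Field K] [NumberField K] :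
    WittSet K (𝓞 K) =
      {ξ : IK K → 𝓞 K | ∀ (p : PrimeIdeal K) (a : IK K),
        ξ (p.toIK * a) - ξ a ∈ p.1 ^ (1 + vIdeal p.1 (a : Ideal (𝓞 K)))} := by
  ext ξ
  simp only [WittSet, Set.mem_iInter, unSet_eq_unSubmodule, SetLike.mem_coe, Set.mem_ofPred_eq]
  refine ⟨fun h p a => ?_, fun h n p a => Ideal.pow_le_pow_right (min_le_right _ _) (h p a)⟩
  simpa using h (1 + vIdeal p.1 a) p a

end
end

section
/- Let K be a number field. If ξ ∈ W_{O_K}(O_K) is a Witt vector whose set of coefficient values C_ξ := { ξ_a ∈ O_K : a ∈ I_K } is finite, then the orbit I_K·ξ := { ψ_a ξ ∈ W_{O_K}(O_K) : a ∈ I_K } of ξ under the shift operators is also a finite set. -/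
open NumberField


noncomputable section

/-!
If `ξ` is a Witt vector then, for every prime `p`, `ξ_{p^{k+1} c} ≡ ξ_{p^k c} mod p^{k+1}`:
this follows by induction along the chain `U_n` from `ψ_p ξ ≡ ξ^{#k_p}` and from the fact
that `x ≡ y mod p^m` implies `x^{#k_p} ≡ y^{#k_p} mod p^{m+1}` (as `#k_p ∈ p`).
Since `ξ` takes only finitely many values, two distinct values are never congruent modulo a
high enough power of `p` (Krull's intersection theorem), and they are not congruent modulo `p`
itself unless `p` divides one of the finitely many differences of distinct values. Hence
`ψ_p ξ = ξ` for all but finitely many primes, and for each of the remaining ones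
`ψ_p^{N+1} ξ = ψ_p^N ξ` for some `N`. The orbit of `ξ` is then finite, because the primes
generate `I_K`.
-/

section Translates

variable {M X : Type*} [CommMonoid M] (f : M → X)

def periodSubmonoid : Submonoid M where
  carrier := {g | ∀ c, f (g * c) = f c}
  one_mem' c := by rw [one_mul]
  mul_mem' {g h} hg hh c := by rw [mul_assoc, hg, hh]

lemma apply_pow_mul_eq_apply_pow_min_mul {s : M} {N : ℕ}
    (hs : ∀ c, f (s ^ (N + 1) * c) = f (s ^ N * c)) (k : ℕ) (c : M) :
    f (s ^ k * c) = f (s ^ min k N * c) := by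
  induction k generalizing c with
  | zero => simp
  | succ k ih =>
    rcases le_or_gt (k + 1) N with hk | hk
    · rw [min_eq_left hk]
    · rw [min_eq_right hk.le, pow_succ, mul_assoc, ih, min_eq_right (Nat.lt_succ_iff.1 hk),
        ← mul_assoc, ← pow_succ, hs]

lemma finite_translates_closure_sup_periodSubmonoid {S : Set M} (hS : S.Finite)
    (hper : ∀ s ∈ S, ∃ N : ℕ, ∀ c, f (s ^ (N + 1) * c) = f (s ^ N * c)) :
    ((fun a c => f (a * c)) '' ↑(Submonoid.closure S ⊔ periodSubmonoid f)).Finite := by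
  induction S, hS using Set.Finite.induction_on with
  | empty =>
    refine (Set.finite_singleton f).subset ?_
    rintro _ ⟨a, ha, rfl⟩
    rw [Submonoid.closure_empty, bot_sup_eq] at ha
    exact funext ha
  | @insert s S _ _ ih =>
    obtain ⟨N, hN⟩ := hper s (Set.mem_insert s S)
    have hS := ih fun t ht => hper t (Set.mem_insert_of_mem s ht)
    refine (Set.finite_le_nat N |>.biUnion fun m _ =>
      hS.image fun g c => g (s ^ m * c)).subset ?_
    rintro _ ⟨a, ha, rfl⟩
    rw [SetLike.mem_coe, Set.insert_eq, Submonoid.closure_union, sup_assoc,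
      Submonoid.mem_sup] at ha
    obtain ⟨_, hk, b, hb, rfl⟩ := ha
    obtain ⟨k, rfl⟩ := Submonoid.mem_closure_singleton.1 hk
    refine Set.mem_biUnion (x := min k N) (min_le_right k N)
      ⟨_, ⟨b, hb, rfl⟩, funext fun c => ?_⟩
    show f (b * (s ^ min k N * c)) = f (s ^ k * b * c)
    rw [mul_assoc, apply_pow_mul_eq_apply_pow_min_mul f hN, mul_left_comm]

theorem finite_range_translates_of_closure_eq_top {G : Set M} (hG : Submonoid.closure G = ⊤)
    (hper : ∀ g ∈ G, ∃ N : ℕ, ∀ c, f (g ^ (N + 1) * c) = f (g ^ N * c))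
    (hfin : {g ∈ G | g ∉ periodSubmonoid f}.Finite) :
    (Set.range fun a c => f (a * c)).Finite := by
  refine (finite_translates_closure_sup_periodSubmonoid f hfin fun g hg => hper g hg.1).subset ?_
  rintro _ ⟨a, rfl⟩
  have hle : Submonoid.closure G ≤ Submonoid.closure {g ∈ G | g ∉ periodSubmonoid f} ⊔
      periodSubmonoid f := by
    refine Submonoid.closure_le.2 fun g hg => ?_
    by_cases hgper : g ∈ periodSubmonoid f
    · exact Submonoid.mem_sup_right hgper
    · exact Submonoid.mem_sup_left (Submonoid.subset_closure ⟨hg, hgper⟩)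
  exact ⟨a, hle (hG ▸ Submonoid.mem_top a), rfl⟩

end Translates

section Congruences

variable {R : Type*} [CommRing R]

lemma Ideal.natCast_card_quotient_mem (I : Ideal R) : (Nat.card (R ⧸ I) : R) ∈ I := by
  rw [← Ideal.Quotient.eq_zero_iff_mem, map_natCast]
  cases finite_or_infinite (R ⧸ I)
  · have := Fintype.ofFinite (R ⧸ I)
    rw [Nat.card_eq_fintype_card, Nat.cast_card_eq_zero]
  · rw [Nat.card_eq_zero_of_infinite, Nat.cast_zero]

lemma Ideal.pow_card_quotient_sub_mem (p : Ideal R) [p.IsMaximal] [Finite (R ⧸ p)] (x : R) :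
    x ^ Nat.card (R ⧸ p) - x ∈ p := by
  let := Ideal.Quotient.field p
  have := Fintype.ofFinite (R ⧸ p)
  rw [← Ideal.Quotient.eq_zero_iff_mem, map_sub, map_pow, Nat.card_eq_fintype_card,
    FiniteField.pow_card, sub_self]

lemma Ideal.pow_sub_pow_mem_pow_succ {I : Ideal R} {q m : ℕ} (hq : (q : R) ∈ I) (hm : m ≠ 0)
    {x y : R} (h : x - y ∈ I ^ m) : x ^ q - y ^ q ∈ I ^ (m + 1) := by
  have hxy : Ideal.Quotient.mk I x = Ideal.Quotient.mk I y :=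
    Ideal.Quotient.eq.2 (Ideal.pow_le_self hm h)
  have hgeom : ∑ i ∈ Finset.range q, x ^ i * y ^ (q - 1 - i) ∈ I := by
    rw [← Ideal.Quotient.eq_zero_iff_mem]
    simp only [map_sum, map_mul, map_pow, hxy, geom_sum₂_self]
    rw [← map_natCast (Ideal.Quotient.mk I), Ideal.Quotient.eq_zero_iff_mem.2 hq, zero_mul]
  rw [← geom_sum₂_mul, pow_succ']
  exact Ideal.mul_mem_mul hgeom h

lemma Ideal.apply_mem_mul_of_mem_smul_span {N : Type*} [AddCommGroup N] [Module R N]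
    (L : N →ₗ[R] R) {I J : Ideal R} {S : Set N} (hS : ∀ x ∈ S, L x ∈ J) {x : N}
    (hx : x ∈ I • Submodule.span R S) : L x ∈ I * J := by
  have hLx := Submodule.mem_map_of_mem (f := L) hx
  rw [Submodule.map_smul'', Submodule.map_span] at hLx
  exact smul_mono_right I (Submodule.span_le.2 (Set.image_subset_iff.2 hS)) hLx

lemma Ideal.exists_forall_notMem_pow [IsNoetherianRing R] [IsDomain R] {I : Ideal R}
    (hI : I ≠ ⊤) {D : Set R} (hD : D.Finite) (h0 : 0 ∉ D) :
    ∃ N, ∀ d ∈ D, d ∉ I ^ N := by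
  have hev : ∀ᶠ N in Filter.atTop, ∀ d ∈ D, d ∉ I ^ N := by
    refine (Filter.eventually_all_finite hD).2 fun d hd => ?_
    have hd0 : d ∉ ⨅ n : ℕ, I ^ n := by
      rw [Ideal.iInf_pow_eq_bot_of_isDomain I hI, Ideal.mem_bot]
      exact ne_of_mem_of_not_mem hd h0
    obtain ⟨n, hn⟩ := not_forall.1 fun h => hd0 (Submodule.mem_iInf _ |>.2 h)
    exact Filter.eventually_atTop.2 ⟨n, fun m hm hdm => hn (Ideal.pow_le_pow_right hm hdm)⟩
  exact hev.exists

end Congruences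

section PrimeIdeals

variable {K : Type} [Field K] [NumberField K]

lemma PrimeIdeal.closure_range_toIK :
    Submonoid.closure (Set.range (PrimeIdeal.toIK (K := K))) = ⊤ := by
  rw [eq_top_iff]
  rintro ⟨I, hI⟩ -
  induction I using UniqueFactorizationMonoid.induction_on_prime with
  | h₁ => exact absurd rfl hI
  | h₂ u hu =>
    have hone : (⟨u, hI⟩ : IK K) = 1 :=
      Subtype.ext ((Ideal.isUnit_iff.1 hu).trans Ideal.one_eq_top.symm)
    exact hone ▸ one_mem _
  | h₃ J q hJ hq ih =>
    have hmul : (⟨q * J, hI⟩ : IK K) =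
        PrimeIdeal.toIK ⟨q, Ideal.isPrime_of_prime hq, hq.ne_zero⟩ * ⟨J, hJ⟩ := rfl
    rw [hmul]
    exact mul_mem (Submonoid.subset_closure ⟨_, rfl⟩) (ih hJ)

lemma PrimeIdeal.finite_setOf_mem {d : 𝓞 K} (hd : d ≠ 0) :
    {p : PrimeIdeal K | d ∈ p.1}.Finite := by
  have hspan : Ideal.span {d} ≠ 0 := by
    rwa [Ne, Ideal.zero_eq_bot, Ideal.span_singleton_eq_bot]
  have := UniqueFactorizationMonoid.fintypeSubtypeDvd _ hspan
  have hdvd : {I : Ideal (𝓞 K) | I ∣ Ideal.span {d}}.Finite :=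
    Set.finite_coe_iff.1 (Finite.of_fintype {I // I ∣ Ideal.span {d}})
  exact (hdvd.preimage Subtype.val_injective.injOn).subset fun p hp =>
    Ideal.dvd_span_singleton.2 hp

end PrimeIdeals

section Witt

variable {K : Type} [Field K] [NumberField K]

lemma UnSet.apply_pow_succ_mul_sub_mem (p : PrimeIdeal K) {n : ℕ} {ξ : IK K → 𝓞 K}
    (hξ : ξ ∈ UnSet K (𝓞 K) n) {k : ℕ} (hk : k < n) (c : IK K) :
    ξ (p.toIK ^ (k + 1) * c) - ξ (p.toIK ^ k * c) ∈ p.1 ^ (k + 1) := by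
  induction n generalizing ξ k with
  | zero => exact absurd hk k.not_lt_zero
  | succ n ih =>
    obtain ⟨-, hδ⟩ := hξ
    set q := residueCard p.1
    set δ := shift p.toIK ξ - ξ ^ q
    have hstep (j : ℕ) :
        ξ (p.toIK ^ (j + 1) * c) = δ (p.toIK ^ j * c) + ξ (p.toIK ^ j * c) ^ q := by
      simp only [δ, shift, Pi.sub_apply, Pi.pow_apply, pow_succ', mul_assoc, sub_add_cancel]
    induction k with
    | zero =>
      have hδc : δ c ∈ p.1 := by
        simpa [δ] using Ideal.apply_mem_mul_of_mem_smul_span (LinearMap.proj c) (J := ⊤)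
          (fun _ _ => Submodule.mem_top) (hδ p)
      have := p.2.1.isMaximal p.2.2
      have := Ideal.finiteQuotientOfFreeOfNeBot p.1 p.2.2
      rw [hstep, pow_zero, one_mul, zero_add, pow_one, add_sub_assoc]
      exact add_mem hδc (Ideal.pow_card_quotient_sub_mem p.1 (ξ c))
    | succ k ihk =>
      have hδk : δ (p.toIK ^ (k + 1) * c) - δ (p.toIK ^ k * c) ∈ p.1 ^ (k + 1 + 1) := by
        rw [pow_succ']
        exact Ideal.apply_mem_mul_of_mem_smul_span (J := p.1 ^ (k + 1))
          (LinearMap.proj (R := 𝓞 K) (φ := fun _ => 𝓞 K) (p.toIK ^ (k + 1) * c) -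
            LinearMap.proj (p.toIK ^ k * c))
          (fun η hη => ih hη (Nat.succ_lt_succ_iff.1 hk)) (hδ p)
      have hξk : ξ (p.toIK ^ (k + 1) * c) ^ q - ξ (p.toIK ^ k * c) ^ q ∈ p.1 ^ (k + 1 + 1) :=
        Ideal.pow_sub_pow_mem_pow_succ (Ideal.natCast_card_quotient_mem p.1) k.succ_ne_zero
          (ihk (Nat.lt_of_succ_lt hk))
      have hdiff : ξ (p.toIK ^ (k + 1 + 1) * c) - ξ (p.toIK ^ (k + 1) * c) =
          (δ (p.toIK ^ (k + 1) * c) - δ (p.toIK ^ k * c)) +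
            (ξ (p.toIK ^ (k + 1) * c) ^ q - ξ (p.toIK ^ k * c) ^ q) := by
        linear_combination hstep (k + 1) - hstep k
      rw [hdiff]
      exact add_mem hδk hξk

lemma WittSet.apply_pow_succ_mul_sub_mem {ξ : IK K → 𝓞 K} (hξ : ξ ∈ WittSet K (𝓞 K))
    (p : PrimeIdeal K) (k : ℕ) (c : IK K) :
    ξ (p.toIK ^ (k + 1) * c) - ξ (p.toIK ^ k * c) ∈ p.1 ^ (k + 1) :=
  UnSet.apply_pow_succ_mul_sub_mem p (Set.mem_iInter.1 hξ (k + 1)) k.lt_succ_self c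

end Witt

/-- if `ξ ∈ W_{O_K}(O_K)` has a finite set of coefficient values
`C_ξ = {ξ_a : a ∈ I_K}`, then its orbit `{ψ_a ξ : a ∈ I_K}` under the shift
operators is also finite. -/
theorem orbit_finite_of_coeffs_finite (K : Type) [Field K] [NumberField K]
    (ξ : IK K → 𝓞 K) (hξ : ξ ∈ WittSet K (𝓞 K))
    (hC : (Set.range ξ).Finite) :
    (Set.range fun a : IK K => shift a ξ).Finite := by
  set D := Set.image2 (· - ·) (Set.range ξ) (Set.range ξ) \ {0}
  have hD : D.Finite := (hC.image2 _ hC).sdiff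
  have eq_of_sub_mem {I : Ideal (𝓞 K)} (hI : ∀ d ∈ D, d ∉ I) (a b : IK K)
      (h : ξ a - ξ b ∈ I) : ξ a = ξ b :=
    by_contra fun hne =>
      hI _ ⟨Set.mem_image2_of_mem ⟨a, rfl⟩ ⟨b, rfl⟩, sub_ne_zero.2 hne⟩ h
  refine finite_range_translates_of_closure_eq_top ξ PrimeIdeal.closure_range_toIK ?_ ?_
  · rintro _ ⟨p, rfl⟩
    obtain ⟨N, hN⟩ := Ideal.exists_forall_notMem_pow p.2.1.ne_top hD fun h => h.2 rfl
    exact ⟨N, fun c => eq_of_sub_mem (fun d hd h => hN d hd (Ideal.pow_le_pow_right N.le_succ h))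
      _ _ (WittSet.apply_pow_succ_mul_sub_mem hξ p N c)⟩
  · refine ((hD.biUnion fun d hd => PrimeIdeal.finite_setOf_mem hd.2).image
      PrimeIdeal.toIK).subset ?_
    rintro _ ⟨⟨p, rfl⟩, hp⟩
    refine ⟨p, ?_, rfl⟩
    by_contra hgood
    refine hp fun c => eq_of_sub_mem (fun d hd hdp => hgood (Set.mem_biUnion hd hdp)) _ _ ?_
    simpa using WittSet.apply_pow_succ_mul_sub_mem hξ p 0 c
end
end
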